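/- For k ≥ 2 and a primitive (2k)-th root of unity ζ, the k-Catalan denominator polynomial satisfies Q_k(x_r,...,x_s) = ζ^{s−r+1} · x_r x_{r+1}···x_s · K_{k,s−r+1}(1/(ζ x_r), 1/(ζ x_{r+1}), ..., 1/(ζ x_s)). -/

import Mathlib

/-- The `k`-continuant `K_{k,n}(x_1, …, x_n)` over a field (variables zero-indexed). -/
def contK {F : Type*} [Field F] (k : ℕ) (x : ℕ → F) : ℕ → F := fun n =>
  if _h : n < k ∨ k = 0 then ∏ i ∈ Finset.range n, x i
  else contK k x (n - k) + contK k x (n - 1) * x (n - 1)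
termination_by n => n
decreasing_by all_goals omega

/-- `S` is a disjoint union of blocks of `k` consecutive integers. -/
def IsBlockUnion (k : ℕ) (S : Finset ℕ) : Prop :=
  ∃ T : Finset ℕ,
    (∀ t ∈ T, ∀ t' ∈ T, t ≠ t' → t + k ≤ t' ∨ t' + k ≤ t) ∧
    S = T.biUnion (fun t => Finset.Ico t (t + k))

open Classical in
/-- The `k`-Catalan denominator polynomial
`Q_k(x_r, …, x_s) = ∑_S (−1)^{|S|/k} ∏_{i ∈ S} x_i`, the sum over all subsets `S`
of `[r, s]` that are disjoint unions of blocks of `k` consecutive integers. -/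
noncomputable def Qnat {F : Type*} [Field F] (k r s : ℕ) (x : ℕ → F) : F :=
  ∑ S ∈ (Finset.Icc r s).powerset.filter (fun S => IsBlockUnion k S),
    (-1 : F) ^ (S.card / k) * ∏ i ∈ S, x i

/-!
As functions of the length `n = s - r + 1` of the interval, both sides equal `1` for `n < k` and
satisfy `f (n + k) = f (n + k - 1) - x_{r+n} ⋯ x_{r+n+k-1} f n`. For `Q_k` this comes from sorting
the block unions by whether they contain the last index, which then lies in a final block of `k`
indices; for the continuant it is the defining recursion multiplied by `ζⁿ x_r ⋯ x_{r+n-1}`, where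
`ζ^k = -1` supplies the sign.
-/

open Finset

section Continuant

variable {F : Type*} [Field F] {k : ℕ}

lemma contK_of_lt {n : ℕ} (y : ℕ → F) (h : n < k) : contK k y n = ∏ i ∈ range n, y i := by
  rw [contK, dif_pos (Or.inl h)]

lemma contK_add (y : ℕ → F) (hk : 0 < k) (n : ℕ) :
    contK k y (n + k) = contK k y n + contK k y (n + k - 1) * y (n + k - 1) := by
  rw [contK, dif_neg (by omega), Nat.add_sub_cancel]

def scaledContK (k : ℕ) (ζ : F) (y : ℕ → F) (n : ℕ) : F :=
  ζ ^ n * (∏ i ∈ range n, y i) * contK k (fun i => (ζ * y i)⁻¹) n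

lemma scaledContK_of_lt {ζ : F} (hζ : ζ ≠ 0) {y : ℕ → F} (hy : ∀ i, y i ≠ 0) {n : ℕ}
    (hn : n < k) : scaledContK k ζ y n = 1 := by
  rw [scaledContK, contK_of_lt _ hn, pow_eq_prod_const, ← prod_mul_distrib,
    ← prod_mul_distrib]
  exact prod_eq_one fun i _ => mul_inv_cancel₀ (mul_ne_zero hζ (hy i))

lemma scaledContK_add {ζ : F} (hζ : ζ ^ k = -1) (hk : 0 < k) {y : ℕ → F}
    (hy : ∀ i, y i ≠ 0) (n : ℕ) :
    scaledContK k ζ y (n + k) =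
      scaledContK k ζ y (n + k - 1) - (∏ i ∈ Ico n (n + k), y i) * scaledContK k ζ y n := by
  have hζ0 : ζ ≠ 0 := by rintro rfl; simp [zero_pow hk.ne'] at hζ
  set K := contK k (fun i => (ζ * y i)⁻¹)
  set m := n + k - 1
  have hm : n + k = m + 1 := by omega
  have hdrop : ζ ^ (n + k) * (∏ i ∈ range (n + k), y i) * K n =
      -(∏ i ∈ Ico n (n + k), y i) * (ζ ^ n * (∏ i ∈ range n, y i) * K n) := by
    rw [pow_add, hζ, ← prod_range_mul_prod_Ico y (Nat.le_add_right n k)]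
    ring
  have hlast : ζ ^ (n + k) * (∏ i ∈ range (n + k), y i) * (K m * (ζ * y m)⁻¹) =
      ζ ^ m * (∏ i ∈ range m, y i) * K m := by
    rw [hm, pow_succ, prod_range_succ]
    field_simp [hζ0, hy m]
  rw [scaledContK, contK_add _ hk, mul_add, hdrop, hlast, scaledContK, scaledContK]
  ring

end Continuant

namespace IsBlockUnion

variable {k : ℕ} {S : Finset ℕ}

lemma empty (k : ℕ) : IsBlockUnion k ∅ := ⟨∅, by simp, by simp⟩

lemma eq_empty_of_card_lt (hS : IsBlockUnion k S) (h : #S < k) : S = ∅ := by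
  obtain ⟨T, -, rfl⟩ := hS
  refine eq_empty_of_forall_notMem fun i hi => ?_
  obtain ⟨t, ht, hi⟩ := mem_biUnion.1 hi
  have := card_le_card (subset_biUnion_of_mem (fun t => Ico t (t + k)) ht)
  rw [Nat.card_Ico, mem_Ico] at *
  omega

lemma union_Ico (hk : 0 < k) (hS : IsBlockUnion k S) {b : ℕ} (hSb : ∀ i ∈ S, i < b) :
    IsBlockUnion k (S ∪ Ico b (b + k)) := by
  obtain ⟨T, hT, rfl⟩ := hS
  have hTb : ∀ t ∈ T, t + k ≤ b := fun t ht =>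
    have := hSb (t + k - 1) (mem_biUnion.2 ⟨t, ht, mem_Ico.2 ⟨by omega, by omega⟩⟩)
    by omega
  refine ⟨insert b T, ?_, by rw [biUnion_insert, union_comm]⟩
  simp only [mem_insert]
  rintro t (rfl | ht) t' (rfl | ht') hne
  · exact absurd rfl hne
  · exact Or.inr (hTb t' ht')
  · exact Or.inl (hTb t ht)
  · exact hT t ht t' ht' hne

lemma exists_eq_union_Ico (hS : IsBlockUnion k S) {b : ℕ} (hSb : ∀ i ∈ S, i < b + k)
    (hlast : b + k - 1 ∈ S) :
    ∃ S', IsBlockUnion k S' ∧ (∀ i ∈ S', i < b) ∧ S = S' ∪ Ico b (b + k) := by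
  obtain ⟨T, hT, rfl⟩ := hS
  obtain ⟨t, ht, hlast'⟩ := mem_biUnion.1 hlast
  rw [mem_Ico] at hlast'
  have hTb : ∀ t ∈ T, t + k ≤ b + k := fun t ht => by
    have := hSb (t + k - 1) (mem_biUnion.2 ⟨t, ht, mem_Ico.2 ⟨by omega, by omega⟩⟩)
    omega
  obtain rfl : b = t := by have := hTb t ht; omega
  have hsep : ∀ c ∈ T.erase b, c + k ≤ b := fun c hc => by
    obtain ⟨hne, hc⟩ := mem_erase.1 hc
    have := hTb c hc
    rcases hT c hc b ht hne with h | h <;> omega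
  refine ⟨(T.erase b).biUnion fun t => Ico t (t + k),
    ⟨T.erase b, fun t ht t' ht' => hT t (mem_of_mem_erase ht) t' (mem_of_mem_erase ht'), rfl⟩,
    fun i hi => ?_, ?_⟩
  · obtain ⟨t, ht, hi⟩ := mem_biUnion.1 hi
    have := hsep t ht
    rw [mem_Ico] at hi
    omega
  · nth_rw 1 [← insert_erase ht]
    rw [biUnion_insert, union_comm]

end IsBlockUnion

section BlockSum

variable {F : Type*} [Field F] {k : ℕ}

open Classical in
/-- `Q_k(x_a, …, x_{a+n-1})`: indexing by the length `n` admits the empty interval, which `Qnat`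
cannot express when `r = 0`. -/
noncomputable def blockSum (k a n : ℕ) (x : ℕ → F) : F :=
  ∑ S ∈ (Ico a (a + n)).powerset.filter (fun S => IsBlockUnion k S),
    (-1 : F) ^ (#S / k) * ∏ i ∈ S, x i

lemma Qnat_eq_blockSum {r s : ℕ} (hrs : r ≤ s) (x : ℕ → F) :
    Qnat k r s x = blockSum k r (s - r + 1) x := by
  rw [Qnat, blockSum, show r + (s - r + 1) = s + 1 by omega, Ico_add_one_right_eq_Icc]

lemma blockSum_of_lt {a n : ℕ} (x : ℕ → F) (hn : n < k) : blockSum k a n x = 1 := by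
  classical
  have hempty : (Ico a (a + n)).powerset.filter (fun S => IsBlockUnion k S) = {∅} := by
    ext S
    simp only [mem_filter, mem_powerset, mem_singleton]
    refine ⟨fun ⟨hsub, hS⟩ => hS.eq_empty_of_card_lt ?_, ?_⟩
    · have := card_le_card hsub
      rw [Nat.card_Ico] at this
      omega
    · rintro rfl
      exact ⟨empty_subset _, IsBlockUnion.empty k⟩
  rw [blockSum, hempty, sum_singleton, card_empty, Nat.zero_div, pow_zero, prod_empty, mul_one]

lemma blockSum_add (hk : 0 < k) (a n : ℕ) (x : ℕ → F) :
    blockSum k a (n + k) x =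
      blockSum k a (n + k - 1) x - (∏ i ∈ Ico (a + n) (a + n + k), x i) * blockSum k a n x := by
  classical
  set B := Ico (a + n) (a + n + k)
  have hdisj : ∀ S ⊆ Ico a (a + n), Disjoint S B := fun S hS =>
    (Ico_disjoint_Ico_consecutive a (a + n) (a + n + k)).mono_left hS
  have hwithout : ((Ico a (a + (n + k))).powerset.filter (fun S => IsBlockUnion k S)).filter
      (fun S => a + n + k - 1 ∉ S) =
      (Ico a (a + (n + k - 1))).powerset.filter (fun S => IsBlockUnion k S) := by
    ext S
    simp only [mem_filter, mem_powerset, subset_iff, mem_Ico]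
    refine ⟨fun ⟨⟨hsub, hS⟩, hlast⟩ => ⟨fun i hi => ?_, hS⟩,
      fun ⟨hsub, hS⟩ => ⟨⟨fun i hi => ?_, hS⟩, fun hlast => ?_⟩⟩
    · have := hsub hi
      have : i ≠ a + n + k - 1 := by rintro rfl; exact hlast hi
      omega
    · have := hsub hi; omega
    · have := hsub hlast; omega
  have hwith : ((Ico a (a + (n + k))).powerset.filter (fun S => IsBlockUnion k S)).filter
      (fun S => a + n + k - 1 ∈ S) =
      ((Ico a (a + n)).powerset.filter (fun S => IsBlockUnion k S)).image (· ∪ B) := by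
    ext S
    simp only [mem_filter, mem_powerset, mem_image]
    constructor
    · rintro ⟨⟨hsub, hS⟩, hlast⟩
      obtain ⟨S', hS', hlt, rfl⟩ := hS.exists_eq_union_Ico (b := a + n)
        (fun i hi => by have := mem_Ico.1 (hsub hi); omega) hlast
      refine ⟨S', ⟨fun i hi => ?_, hS'⟩, rfl⟩
      have := mem_Ico.1 (hsub (mem_union_left _ hi))
      have := hlt i hi
      exact mem_Ico.2 ⟨by omega, by omega⟩
    · rintro ⟨S', ⟨hsub, hS'⟩, rfl⟩
      refine ⟨⟨union_subset (hsub.trans (Ico_subset_Ico_right (by omega))) ?_,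
        hS'.union_Ico hk fun i hi => (mem_Ico.1 (hsub hi)).2⟩, ?_⟩
      · exact Ico_subset_Ico (by omega) (by omega)
      · exact mem_union_right _ (mem_Ico.2 ⟨by omega, by omega⟩)
  rw [blockSum, ← sum_filter_add_sum_filter_not _ (fun S => a + n + k - 1 ∈ S), hwith,
    hwithout, sum_image, blockSum, blockSum, mul_sum, add_comm, sub_eq_add_neg, ← sum_neg_distrib]
  · congr 1
    refine sum_congr rfl fun S hS => ?_
    have hSB := hdisj S (mem_powerset.1 (mem_filter.1 hS).1)
    rw [card_union_of_disjoint hSB, Nat.card_Ico, show a + n + k - (a + n) = k by omega,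
      Nat.add_div_right _ hk, prod_union hSB, pow_succ]
    ring
  · intro S hS T hT hST
    rw [← union_sdiff_cancel_right (hdisj S (mem_powerset.1 (mem_filter.1 hS).1)),
      ← union_sdiff_cancel_right (hdisj T (mem_powerset.1 (mem_filter.1 hT).1))]
    exact congrArg (· \ B) hST

end BlockSum

lemma eq_of_base_of_recurrence {R : Type*} [Ring R] {k : ℕ} (hk : 0 < k)
    {f g c : ℕ → R} (hbase : ∀ n < k, f n = g n)
    (hf : ∀ n, f (n + k) = f (n + k - 1) - c n * f n)
    (hg : ∀ n, g (n + k) = g (n + k - 1) - c n * g n) (n : ℕ) : f n = g n := by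
  induction n using Nat.strong_induction_on with
  | _ n ih =>
    obtain hn | ⟨m, rfl⟩ : n < k ∨ ∃ m, n = m + k :=
      (lt_or_ge n k).imp_right fun h => ⟨n - k, by omega⟩
    · exact hbase n hn
    · rw [hf, hg, ih _ (by omega), ih m (by omega)]

lemma blockSum_eq_scaledContK {F : Type*} [Field F] {k : ℕ} (hk : 0 < k) {ζ : F}
    (hζ : ζ ^ k = -1) {x : ℕ → F} (hx : ∀ i, x i ≠ 0) (a n : ℕ) :
    blockSum k a n x = scaledContK k ζ (fun i => x (a + i)) n := by
  have hζ0 : ζ ≠ 0 := by rintro rfl; simp [zero_pow hk.ne'] at hζ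
  refine eq_of_base_of_recurrence hk (f := fun n => blockSum k a n x)
    (c := fun n => ∏ i ∈ Ico n (n + k), x (a + i))
    (fun n hn => ?_) (fun n => ?_) (scaledContK_add hζ hk fun i => hx (a + i)) n
  · rw [blockSum_of_lt x hn, scaledContK_of_lt hζ0 (fun i => hx (a + i)) hn]
  · rw [blockSum_add hk, prod_Ico_add, add_comm n a, add_comm (n + k) a, add_assoc]

/-- For `k ≥ 2` and a primitive `2k`-th root of unity `ζ` (in any field containing
one), with all variables nonzero, the `k`-Catalan denominator polynomial satisfies
`Q_k(x_r, …, x_s) = ζ^{s-r+1} · x_r x_{r+1} ⋯ x_s ·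
K_{k, s-r+1}(1/(ζ x_r), 1/(ζ x_{r+1}), …, 1/(ζ x_s))`. -/
theorem stmt14 {F : Type*} [Field F] (k : ℕ) (hk : 2 ≤ k) (ζ : F)
    (hζ : IsPrimitiveRoot ζ (2 * k)) (x : ℕ → F) (hx : ∀ i, x i ≠ 0)
    (r s : ℕ) (hrs : r ≤ s) :
    Qnat k r s x =
      ζ ^ (s - r + 1) * (∏ i ∈ Finset.Icc r s, x i) *
        contK k (fun i => (ζ * x (r + i))⁻¹) (s - r + 1) := by
  have hζk : ζ ^ k = -1 :=
    (hζ.pow (by omega) (mul_comm 2 k)).eq_neg_one_of_two_right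
  rw [Qnat_eq_blockSum hrs, blockSum_eq_scaledContK (by omega) hζk hx, scaledContK,
    ← Ico_add_one_right_eq_Icc, prod_Ico_eq_prod_range, show s + 1 - r = s - r + 1 by omega]
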